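/- arXiv:1410.2040 — 6 statements merged into one kernel-verified Lean document; each statement's English description precedes it below -/
import Mathlib

section
/- For any divisors m and k of n, the projectors satisfy P(m)·P(k) = P(gcd(m,k)). -/
open Matrix BigOperators
open scoped ComplexOrder

/-- The projector `P(m)` onto the position states of subsystem `Σ(m)` embedded in `Σ(n)`:
`P(m) = ∑_{r=0}^{m-1} E_{(n/m)r}` where `E_j` is the diagonal matrix unit at `(j,j)`. -/
noncomputable def projP (n : ℕ) [NeZero n] (m : ℕ) : Matrix (ZMod n) (ZMod n) ℂ :=
  ∑ r ∈ Finset.range m,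
    Matrix.single ((n / m * r : ℕ) : ZMod n) ((n / m * r : ℕ) : ZMod n) (1 : ℂ)

/-- The lower probability `ℓ(m|ρ) = Tr(P(m) ρ)` (a real number). -/
noncomputable def lowerProb (n : ℕ) [NeZero n] (m : ℕ)
    (ρ : Matrix (ZMod n) (ZMod n) ℂ) : ℝ :=
  (Matrix.trace (projP n m * ρ)).re

/-- The negation `¬m = ∏_p p^{v_p(n)}` over primes `p` dividing `n` but not `m`. -/
def negDiv (n m : ℕ) : ℕ :=
  ∏ p ∈ n.primeFactors.filter (fun p => ¬ p ∣ m), p ^ (n.factorization p)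

/-- The upper probability `u(m|ρ) = 1 - ℓ(¬m|ρ) + ℓ(1|ρ)`. -/
noncomputable def upperProb (n : ℕ) [NeZero n] (m : ℕ)
    (ρ : Matrix (ZMod n) (ZMod n) ℂ) : ℝ :=
  1 - lowerProb n (negDiv n m) ρ + lowerProb n 1 ρ

lemma projP_eq_diagonal (n : ℕ) [NeZero n] (m : ℕ) (hm : m ∣ n) :
    projP n m = Matrix.diagonal (fun i : ZMod n =>
      if (n / m : ℕ) ∣ i.val then (1 : ℂ) else 0) := by
  have hn : n ≠ 0 := NeZero.ne n
  have hm0 : m ≠ 0 := by rintro rfl; simp at hm; exact hn hm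
  have hdm : (n / m) * m = n := Nat.div_mul_cancel hm
  set d := n / m with hd
  have hlt : ∀ r, r ∈ Finset.range m → d * r < n := by
    intro r hr
    rw [Finset.mem_range] at hr
    have hd0 : 0 < d := by
      rcases Nat.eq_zero_or_pos d with h | h
      · exfalso; rw [h, zero_mul] at hdm; exact hn hdm.symm
      · exact h
    calc d * r < d * m := Nat.mul_lt_mul_of_pos_left hr hd0
      _ = n := hdm
  ext i j
  simp only [projP, Matrix.sum_apply, Matrix.single, Matrix.of_apply,
    Matrix.diagonal_apply]
  by_cases hij : i = j
  · subst hij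
    simp only [if_pos rfl]
    by_cases hdvd : d ∣ i.val
    · rw [if_pos hdvd]
      obtain ⟨r0, hr0⟩ := hdvd
      have hr0m : r0 < m := by
        by_contra h
        push_neg at h
        have : n ≤ d * r0 := hdm ▸ Nat.mul_le_mul_left d h
        have := i.val_lt
        omega
      rw [Finset.sum_eq_single_of_mem r0 (Finset.mem_range.mpr hr0m)]
      · have : ((d * r0 : ℕ) : ZMod n) = i := by
          rw [← hr0, ZMod.natCast_zmod_val]
        simp [this]
        exact_mod_cast this
      · intro r hr hne
        rw [if_neg]
        rintro ⟨h1, -⟩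
        apply hne
        have hv : (d * r) = i.val := by
          rw [← h1, ZMod.val_cast_of_lt (hlt r hr)]
        have : d * r = d * r0 := by omega
        have hd0 : d ≠ 0 := by
          intro h; rw [h] at hdm; simp at hdm; exact hn hdm.symm
        exact Nat.eq_of_mul_eq_mul_left (Nat.pos_of_ne_zero hd0) this
    · rw [if_neg hdvd]
      apply Finset.sum_eq_zero
      intro r hr
      rw [if_neg]
      rintro ⟨h1, -⟩
      apply hdvd
      have hv : (d * r) = i.val := by
        rw [← h1, ZMod.val_cast_of_lt (hlt r hr)]
      exact ⟨r, hv.symm⟩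
  · rw [if_neg hij]
    apply Finset.sum_eq_zero
    intro r _
    rw [if_neg]
    rintro ⟨h1, h2⟩
    exact hij (h1 ▸ h2)

/-- For any divisors `m` and `k` of `n`, `P(m)·P(k) = P(gcd(m,k))`. -/
theorem projP_mul_projP (n : ℕ) [NeZero n] (m k : ℕ) (hm : m ∣ n) (hk : k ∣ n) :
    projP n m * projP n k = projP n (Nat.gcd m k) := by
  have hn : n ≠ 0 := NeZero.ne n
  have hm0 : m ≠ 0 := by rintro rfl; simp at hm; exact hn hm
  have hk0 : k ≠ 0 := by rintro rfl; simp at hk; exact hn hk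
  have hg : Nat.gcd m k ∣ n := (Nat.gcd_dvd_left m k).trans hm
  have hg0 : Nat.gcd m k ≠ 0 := Nat.gcd_ne_zero_left hm0
  rw [projP_eq_diagonal n m hm, projP_eq_diagonal n k hk, projP_eq_diagonal n _ hg,
    Matrix.diagonal_mul_diagonal]
  refine congrArg Matrix.diagonal (funext fun i => ?_)
  have key : ((n / m ∣ i.val) ∧ (n / k ∣ i.val)) ↔ (n / Nat.gcd m k ∣ i.val) := by
    rw [Nat.div_dvd_iff_dvd_mul hm (Nat.pos_of_ne_zero hm0), Nat.div_dvd_iff_dvd_mul hk (Nat.pos_of_ne_zero hk0),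
      Nat.div_dvd_iff_dvd_mul hg (Nat.pos_of_ne_zero hg0)]
    constructor
    · rintro ⟨h1, h2⟩
      have := Nat.dvd_gcd h1 h2
      rwa [Nat.gcd_mul_right] at this
    · intro h
      constructor
      · exact h.trans (Nat.mul_dvd_mul_right (Nat.gcd_dvd_left m k) _)
      · exact h.trans (Nat.mul_dvd_mul_right (Nat.gcd_dvd_right m k) _)
  by_cases h1 : (n / m : ℕ) ∣ i.val <;> by_cases h2 : (n / k : ℕ) ∣ i.val <;>
    simp only [h1, h2, if_true, if_false, mul_one, mul_zero, one_mul]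
  · rw [if_pos (key.mp ⟨h1, h2⟩)]
  · rw [if_neg (fun h => h2 (key.mpr h).2)]
  · rw [if_neg (fun h => h1 (key.mpr h).1)]
  · rw [if_neg (fun h => h1 (key.mpr h).1)]
end

section
/- For any divisors m₁ and m₂ of n, the matrix 𝔖(m₁,m₂) = P(lcm(m₁,m₂)) − P(m₁) − P(m₂) + P(gcd(m₁,m₂)) is an orthogonal projection (Hermitian and idempotent), and it is orthogonal to 𝔗(m₁,m₂) = P(m₁) + P(m₂) − P(gcd(m₁,m₂)), i.e., 𝔖(m₁,m₂)·𝔗(m₁,m₂) = 0. -/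
open Matrix BigOperators
open scoped ComplexOrder

lemma projP_eq_diag (n : ℕ) [NeZero n] (m : ℕ) (h : m ∣ n) :
    projP n m = Matrix.diagonal (fun x : ZMod n =>
      if (m : ZMod n) * x = 0 then (1 : ℂ) else 0) := by
  have hn : n ≠ 0 := NeZero.ne n
  have hm : 0 < m := Nat.pos_of_dvd_of_pos h (Nat.pos_of_ne_zero hn)
  obtain ⟨d, hdm⟩ := h
  have hnm : n / m = d := by rw [hdm]; exact Nat.mul_div_cancel_left d hm
  have hdpos : 0 < d := by
    rcases Nat.eq_zero_or_pos d with h0 | h0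
    · subst h0; simp at hdm; omega
    · exact h0
  have key : ∀ x : ZMod n, ((m : ZMod n) * x = 0) ↔ d ∣ x.val := by
    intro x
    have hx : (m : ZMod n) * x = ((m * x.val : ℕ) : ZMod n) := by
      rw [Nat.cast_mul, ZMod.natCast_zmod_val]
    rw [hx, ZMod.natCast_eq_zero_iff]
    constructor
    · intro hh
      exact (Nat.mul_dvd_mul_iff_left hm).mp ((dvd_of_eq hdm.symm).trans hh)
    · intro hh
      exact (dvd_of_eq hdm).trans (Nat.mul_dvd_mul_left m hh)
  ext i j
  simp only [projP, Matrix.sum_apply, hnm, Matrix.single, Matrix.of_apply]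
  rcases eq_or_ne i j with rfl | hij
  · rw [Matrix.diagonal_apply_eq]
    by_cases h0 : (m : ZMod n) * i = 0
    · rw [if_pos h0]
      have hdvd : d ∣ i.val := (key i).mp h0
      obtain ⟨r₀, hdr0⟩ := hdvd
      have hr0m : r₀ < m := by
        have hlt : i.val < n := ZMod.val_lt i
        rw [hdr0, hdm, mul_comm m d] at hlt
        exact lt_of_mul_lt_mul_left hlt (le_of_lt hdpos)
      have hcast : ((d * r₀ : ℕ) : ZMod n) = i := by
        rw [← hdr0, ZMod.natCast_zmod_val]
      rw [Finset.sum_eq_single_of_mem r₀ (Finset.mem_range.mpr hr0m)]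
      · rw [if_pos ⟨hcast, hcast⟩]
      · intro r hr hne
        have hr' : r < m := Finset.mem_range.mp hr
        have hne' : ((d * r : ℕ) : ZMod n) ≠ i := by
          intro hc
          apply hne
          have h1 : ((d * r : ℕ) : ZMod n) = ((d * r₀ : ℕ) : ZMod n) := by rw [hc, hcast]
          have hv1 : d * r < n := by
            rw [hdm, mul_comm m d]; exact (Nat.mul_lt_mul_left hdpos).mpr hr'
          have hv2 : d * r₀ < n := by
            rw [hdm, mul_comm m d]; exact (Nat.mul_lt_mul_left hdpos).mpr hr0m
          have h2 := congrArg ZMod.val h1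
          rw [ZMod.val_cast_of_lt hv1, ZMod.val_cast_of_lt hv2] at h2
          exact Nat.eq_of_mul_eq_mul_left hdpos h2
        rw [if_neg]
        rintro ⟨hc, -⟩
        exact hne' hc
    · rw [if_neg h0]
      apply Finset.sum_eq_zero
      intro r hr
      rw [if_neg]
      rintro ⟨hc, -⟩
      apply h0
      rw [← hc, ← Nat.cast_mul, ZMod.natCast_eq_zero_iff]
      exact ⟨r, by rw [hdm]; ring⟩
  · rw [Matrix.diagonal_apply_ne _ hij]
    apply Finset.sum_eq_zero
    intro r _
    rw [if_neg]
    rintro ⟨hc1, hc2⟩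
    exact hij (hc1 ▸ hc2 ▸ rfl)

lemma projP_isHermitian (n : ℕ) [NeZero n] (m : ℕ) (h : m ∣ n) :
    (projP n m).IsHermitian := by
  rw [projP_eq_diag n m h]
  unfold Matrix.IsHermitian
  rw [Matrix.diagonal_conjTranspose]
  refine congrArg Matrix.diagonal (funext fun x => ?_)
  simp only [Pi.star_apply]
  split <;> simp

lemma projP_mul (n : ℕ) [NeZero n] (a b : ℕ) (ha : a ∣ n) (hb : b ∣ n) :
    projP n a * projP n b = projP n (Nat.gcd a b) := by
  have hg : Nat.gcd a b ∣ n := (Nat.gcd_dvd_left a b).trans ha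
  rw [projP_eq_diag n a ha, projP_eq_diag n b hb, projP_eq_diag n _ hg,
    Matrix.diagonal_mul_diagonal]
  refine congrArg Matrix.diagonal (funext fun x => ?_)
  have key : ∀ c : ℕ, ((c : ZMod n) * x = 0) ↔ addOrderOf x ∣ c := by
    intro c
    rw [← nsmul_eq_mul]
    exact (addOrderOf_dvd_iff_nsmul_eq_zero).symm
  by_cases hx : addOrderOf x ∣ Nat.gcd a b
  · rw [if_pos ((key a).mpr (hx.trans (Nat.gcd_dvd_left a b))),
      if_pos ((key b).mpr (hx.trans (Nat.gcd_dvd_right a b))),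
      if_pos ((key _).mpr hx), one_mul]
  · rw [if_neg (fun hc => hx ((key _).mp hc))]
    by_cases hxa : addOrderOf x ∣ a
    · have hxb : ¬ addOrderOf x ∣ b := fun hxb => hx (Nat.dvd_gcd hxa hxb)
      rw [if_neg (fun hc => hxb ((key b).mp hc)), mul_zero]
    · rw [if_neg (fun hc => hxa ((key a).mp hc)), zero_mul]

/-- `𝔖(m₁,m₂) = P(lcm) − P(m₁) − P(m₂) + P(gcd)` is an orthogonal projection, orthogonal to
`𝔗(m₁,m₂) = P(m₁) + P(m₂) − P(gcd)`. -/
theorem projS_isProjection_orthogonal (n : ℕ) [NeZero n] (m₁ m₂ : ℕ)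
    (h₁ : m₁ ∣ n) (h₂ : m₂ ∣ n) :
    (projP n (Nat.lcm m₁ m₂) - projP n m₁ - projP n m₂ + projP n (Nat.gcd m₁ m₂)).IsHermitian ∧
    (projP n (Nat.lcm m₁ m₂) - projP n m₁ - projP n m₂ + projP n (Nat.gcd m₁ m₂)) *
        (projP n (Nat.lcm m₁ m₂) - projP n m₁ - projP n m₂ + projP n (Nat.gcd m₁ m₂)) =
      (projP n (Nat.lcm m₁ m₂) - projP n m₁ - projP n m₂ + projP n (Nat.gcd m₁ m₂)) ∧
    (projP n (Nat.lcm m₁ m₂) - projP n m₁ - projP n m₂ + projP n (Nat.gcd m₁ m₂)) *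
        (projP n m₁ + projP n m₂ - projP n (Nat.gcd m₁ m₂)) = 0 := by
  have hg : Nat.gcd m₁ m₂ ∣ n := (Nat.gcd_dvd_left m₁ m₂).trans h₁
  have hl : Nat.lcm m₁ m₂ ∣ n := Nat.lcm_dvd h₁ h₂
  have hGL : Nat.gcd m₁ m₂ ∣ Nat.lcm m₁ m₂ :=
    (Nat.gcd_dvd_left m₁ m₂).trans (Nat.dvd_lcm_left m₁ m₂)
  have hLL : projP n (Nat.lcm m₁ m₂) * projP n (Nat.lcm m₁ m₂) = projP n (Nat.lcm m₁ m₂) := by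
    rw [projP_mul n _ _ hl hl, Nat.gcd_self]
  have hLA : projP n (Nat.lcm m₁ m₂) * projP n m₁ = projP n m₁ := by
    rw [projP_mul n _ _ hl h₁, Nat.gcd_eq_right (Nat.dvd_lcm_left m₁ m₂)]
  have hAL : projP n m₁ * projP n (Nat.lcm m₁ m₂) = projP n m₁ := by
    rw [projP_mul n _ _ h₁ hl, Nat.gcd_eq_left (Nat.dvd_lcm_left m₁ m₂)]
  have hLB : projP n (Nat.lcm m₁ m₂) * projP n m₂ = projP n m₂ := by
    rw [projP_mul n _ _ hl h₂, Nat.gcd_eq_right (Nat.dvd_lcm_right m₁ m₂)]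
  have hBL : projP n m₂ * projP n (Nat.lcm m₁ m₂) = projP n m₂ := by
    rw [projP_mul n _ _ h₂ hl, Nat.gcd_eq_left (Nat.dvd_lcm_right m₁ m₂)]
  have hLG : projP n (Nat.lcm m₁ m₂) * projP n (Nat.gcd m₁ m₂) = projP n (Nat.gcd m₁ m₂) := by
    rw [projP_mul n _ _ hl hg, Nat.gcd_eq_right hGL]
  have hGL' : projP n (Nat.gcd m₁ m₂) * projP n (Nat.lcm m₁ m₂) = projP n (Nat.gcd m₁ m₂) := by
    rw [projP_mul n _ _ hg hl, Nat.gcd_eq_left hGL]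
  have hAA : projP n m₁ * projP n m₁ = projP n m₁ := by
    rw [projP_mul n _ _ h₁ h₁, Nat.gcd_self]
  have hBB : projP n m₂ * projP n m₂ = projP n m₂ := by
    rw [projP_mul n _ _ h₂ h₂, Nat.gcd_self]
  have hAB : projP n m₁ * projP n m₂ = projP n (Nat.gcd m₁ m₂) :=
    projP_mul n _ _ h₁ h₂
  have hBA : projP n m₂ * projP n m₁ = projP n (Nat.gcd m₁ m₂) := by
    rw [projP_mul n _ _ h₂ h₁, Nat.gcd_comm]
  have hAG : projP n m₁ * projP n (Nat.gcd m₁ m₂) = projP n (Nat.gcd m₁ m₂) := by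
    rw [projP_mul n _ _ h₁ hg, Nat.gcd_eq_right (Nat.gcd_dvd_left m₁ m₂)]
  have hGA : projP n (Nat.gcd m₁ m₂) * projP n m₁ = projP n (Nat.gcd m₁ m₂) := by
    rw [projP_mul n _ _ hg h₁, Nat.gcd_eq_left (Nat.gcd_dvd_left m₁ m₂)]
  have hBG : projP n m₂ * projP n (Nat.gcd m₁ m₂) = projP n (Nat.gcd m₁ m₂) := by
    rw [projP_mul n _ _ h₂ hg, Nat.gcd_eq_right (Nat.gcd_dvd_right m₁ m₂)]
  have hGB : projP n (Nat.gcd m₁ m₂) * projP n m₂ = projP n (Nat.gcd m₁ m₂) := by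
    rw [projP_mul n _ _ hg h₂, Nat.gcd_eq_left (Nat.gcd_dvd_right m₁ m₂)]
  have hGG : projP n (Nat.gcd m₁ m₂) * projP n (Nat.gcd m₁ m₂) = projP n (Nat.gcd m₁ m₂) := by
    rw [projP_mul n _ _ hg hg, Nat.gcd_self]
  refine ⟨?_, ?_, ?_⟩
  · exact (((projP_isHermitian n _ hl).sub (projP_isHermitian n _ h₁)).sub
      (projP_isHermitian n _ h₂)).add (projP_isHermitian n _ hg)
  · simp only [sub_mul, mul_sub, add_mul, mul_add, hLL, hLA, hAL, hLB, hBL, hLG, hGL', hAA,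
      hBB, hAB, hBA, hAG, hGA, hBG, hGB, hGG]
    abel
  · simp only [sub_mul, mul_sub, add_mul, mul_add, hLL, hLA, hAL, hLB, hBL, hLG, hGL', hAA,
      hBB, hAB, hBA, hAG, hGA, hBG, hGB, hGG]
    abel
end

section
/- (Supermodularity of the lower probability.) Let ρ be an n×n positive semidefinite complex matrix. For any divisors m₁ and m₂ of n, ℓ(lcm(m₁,m₂)|ρ) − ℓ(m₁|ρ) − ℓ(m₂|ρ) + ℓ(gcd(m₁,m₂)|ρ) = Tr(ρ·𝔖(m₁,m₂)), where 𝔖(m₁,m₂) = P(lcm(m₁,m₂)) − P(m₁) − P(m₂) + P(gcd(m₁,m₂)); in particular this quantity is nonnegative: ℓ(lcm(m₁,m₂)|ρ) − ℓ(m₁|ρ) − ℓ(m₂|ρ) + ℓ(gcd(m₁,m₂)|ρ) ≥ 0. -/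
open Matrix BigOperators
open scoped ComplexOrder

lemma aux_div_dvd_div_of_dvd {a b n : ℕ} (hn : n ≠ 0) (hab : a ∣ b) (hbn : b ∣ n) :
    n / b ∣ n / a := by
  have ha : a ∣ n := hab.trans hbn
  have hb0 : b ≠ 0 := by rintro rfl; simp_all [Nat.eq_zero_of_zero_dvd]
  rw [Nat.div_dvd_iff_dvd_mul hbn (Nat.pos_of_ne_zero hb0)]
  obtain ⟨c, rfl⟩ := hab
  have ha0 : a ≠ 0 := by rintro rfl; simp_all
  have : a * c * (n / a) = c * n := by
    rw [mul_comm a c, mul_assoc, Nat.mul_div_cancel' ha]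
  rw [this]
  exact dvd_mul_left n c

lemma aux_gcd_div_dvd_iff {m₁ m₂ n v : ℕ} (hn : n ≠ 0) (h₁ : m₁ ∣ n) (h₂ : m₂ ∣ n) :
    n / Nat.gcd m₁ m₂ ∣ v ↔ n / m₁ ∣ v ∧ n / m₂ ∣ v := by
  have hm₁0 : m₁ ≠ 0 := by rintro rfl; simp_all [Nat.eq_zero_of_zero_dvd]
  have hg : Nat.gcd m₁ m₂ ∣ n := (Nat.gcd_dvd_left m₁ m₂).trans h₁
  have hg0 : Nat.gcd m₁ m₂ ≠ 0 := Nat.gcd_ne_zero_left hm₁0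
  constructor
  · intro h
    exact ⟨(aux_div_dvd_div_of_dvd hn (Nat.gcd_dvd_left _ _) h₁).trans h,
      (aux_div_dvd_div_of_dvd hn (Nat.gcd_dvd_right _ _) h₂).trans h⟩
  · rintro ⟨ha, hb⟩
    rw [Nat.div_dvd_iff_dvd_mul hg (Nat.pos_of_ne_zero hg0), ← Nat.gcd_mul_right]
    refine Nat.dvd_gcd ?_ ?_
    · calc n = m₁ * (n / m₁) := (Nat.mul_div_cancel' h₁).symm
        _ ∣ m₁ * v := Nat.mul_dvd_mul_left _ ha
    · calc n = m₂ * (n / m₂) := (Nat.mul_div_cancel' h₂).symm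
        _ ∣ m₂ * v := Nat.mul_dvd_mul_left _ hb

lemma aux_lowerProb_eq_sum (n : ℕ) [NeZero n] (m : ℕ) (hm : m ∣ n)
    (ρ : Matrix (ZMod n) (ZMod n) ℂ) :
    lowerProb n m ρ =
      ∑ j ∈ Finset.univ.filter (fun j : ZMod n => (n / m) ∣ j.val), (ρ j j).re := by
  have hn : n ≠ 0 := NeZero.ne n
  have hm0 : m ≠ 0 := by rintro rfl; simp [Nat.eq_zero_of_zero_dvd hm] at hn
  have hd0 : n / m ≠ 0 :=
    Nat.div_ne_zero_iff.2 ⟨hm0, Nat.le_of_dvd (Nat.pos_of_ne_zero hn) hm⟩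
  have hnm : n / m * m = n := Nat.div_mul_cancel hm
  have hval : ∀ r ∈ Finset.range m, (((n / m * r : ℕ) : ZMod n)).val = n / m * r := by
    intro r hr
    apply ZMod.val_natCast_of_lt
    calc n / m * r < n / m * m :=
          (Nat.mul_lt_mul_left (Nat.pos_of_ne_zero hd0)).2 (Finset.mem_range.1 hr)
      _ = n := hnm
  have htr : lowerProb n m ρ = ∑ r ∈ Finset.range m, (ρ ((n / m * r : ℕ) : ZMod n)
      ((n / m * r : ℕ) : ZMod n)).re := by
    unfold lowerProb projP
    rw [Finset.sum_mul, Matrix.trace_sum, Complex.re_sum]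
    congr 1; ext r
    congr 1
    simp [Matrix.trace, Matrix.mul_apply, Matrix.single, Matrix.diag,
      Finset.sum_ite_eq, Finset.sum_ite_eq', ite_and]
  rw [htr]
  refine Finset.sum_bij (fun r _ => ((n / m * r : ℕ) : ZMod n)) ?_ ?_ ?_ ?_
  · intro r hr
    simp only [Finset.mem_filter, Finset.mem_univ, true_and]
    rw [hval r hr]; exact Dvd.intro r rfl
  · intro r hr r' hr' h
    have := congrArg ZMod.val h
    rw [hval r hr, hval r' hr'] at this
    exact Nat.eq_of_mul_eq_mul_left (Nat.pos_of_ne_zero hd0) this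
  · intro j hj
    simp only [Finset.mem_filter, Finset.mem_univ, true_and] at hj
    obtain ⟨r, hr⟩ := hj
    refine ⟨r, Finset.mem_range.2 ?_, ?_⟩
    · by_contra h
      push_neg at h
      have : n ≤ n / m * r := by
        calc n = n / m * m := hnm.symm
          _ ≤ n / m * r := Nat.mul_le_mul_left _ h
      have := j.val_lt
      omega
    · show ((n / m * r : ℕ) : ZMod n) = j
      rw [← hr, ZMod.natCast_val, ZMod.cast_id]
  · intro r hr; rfl

lemma aux_diag_re_nonneg {n : ℕ} [NeZero n] {ρ : Matrix (ZMod n) (ZMod n) ℂ}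
    (hρ : ρ.PosSemidef) (j : ZMod n) : 0 ≤ (ρ j j).re := by
  have := hρ.re_dotProduct_nonneg (Pi.single j 1)
  simpa [dotProduct, Matrix.mulVec, Pi.single_apply] using this

/-- Supermodularity of the lower probability:
`ℓ(lcm|ρ) − ℓ(m₁|ρ) − ℓ(m₂|ρ) + ℓ(gcd|ρ) = Tr(ρ 𝔖(m₁,m₂)) ≥ 0`. -/
theorem lowerProb_supermodular (n : ℕ) [NeZero n] (ρ : Matrix (ZMod n) (ZMod n) ℂ)
    (hρ : ρ.PosSemidef) (m₁ m₂ : ℕ) (h₁ : m₁ ∣ n) (h₂ : m₂ ∣ n) :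
    lowerProb n (Nat.lcm m₁ m₂) ρ - lowerProb n m₁ ρ - lowerProb n m₂ ρ +
        lowerProb n (Nat.gcd m₁ m₂) ρ =
      (Matrix.trace (ρ *
        (projP n (Nat.lcm m₁ m₂) - projP n m₁ - projP n m₂ + projP n (Nat.gcd m₁ m₂)))).re ∧
    0 ≤ lowerProb n (Nat.lcm m₁ m₂) ρ - lowerProb n m₁ ρ - lowerProb n m₂ ρ +
        lowerProb n (Nat.gcd m₁ m₂) ρ := by
  have hn : n ≠ 0 := NeZero.ne n
  constructor
  · simp only [lowerProb, mul_sub, mul_add, Matrix.trace_sub, Matrix.trace_add,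
      Matrix.trace_mul_comm ρ, Complex.sub_re, Complex.add_re]
  · have hlcm : Nat.lcm m₁ m₂ ∣ n := Nat.lcm_dvd h₁ h₂
    have hgcd : Nat.gcd m₁ m₂ ∣ n := (Nat.gcd_dvd_left m₁ m₂).trans h₁
    set F : ℕ → Finset (ZMod n) :=
      fun m => Finset.univ.filter (fun j : ZMod n => (n / m) ∣ j.val) with hF
    rw [aux_lowerProb_eq_sum n _ hlcm, aux_lowerProb_eq_sum n _ h₁,
      aux_lowerProb_eq_sum n _ h₂, aux_lowerProb_eq_sum n _ hgcd]
    have hinter : F m₁ ∩ F m₂ = F (Nat.gcd m₁ m₂) := by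
      ext j
      simp only [hF, Finset.mem_inter, Finset.mem_filter, Finset.mem_univ, true_and]
      exact (aux_gcd_div_dvd_iff hn h₁ h₂).symm
    have hsub : F m₁ ∪ F m₂ ⊆ F (Nat.lcm m₁ m₂) := by
      intro j hj
      simp only [hF, Finset.mem_union, Finset.mem_filter, Finset.mem_univ, true_and] at hj ⊢
      rcases hj with hj | hj
      · exact (aux_div_dvd_div_of_dvd hn (Nat.dvd_lcm_left m₁ m₂) hlcm).trans hj
      · exact (aux_div_dvd_div_of_dvd hn (Nat.dvd_lcm_right m₁ m₂) hlcm).trans hj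
    have key : (∑ j ∈ F (Nat.lcm m₁ m₂), (ρ j j).re) - ∑ j ∈ F m₁, (ρ j j).re
        - ∑ j ∈ F m₂, (ρ j j).re + ∑ j ∈ F (Nat.gcd m₁ m₂), (ρ j j).re
        = ∑ j ∈ F (Nat.lcm m₁ m₂) \ (F m₁ ∪ F m₂), (ρ j j).re := by
      have h1 : (∑ j ∈ F m₁ ∪ F m₂, (ρ j j).re) + ∑ j ∈ F m₁ ∩ F m₂, (ρ j j).re
          = (∑ j ∈ F m₁, (ρ j j).re) + ∑ j ∈ F m₂, (ρ j j).re :=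
        Finset.sum_union_inter
      have h2 : (∑ j ∈ F (Nat.lcm m₁ m₂) \ (F m₁ ∪ F m₂), (ρ j j).re)
          + ∑ j ∈ F m₁ ∪ F m₂, (ρ j j).re = ∑ j ∈ F (Nat.lcm m₁ m₂), (ρ j j).re :=
        Finset.sum_sdiff hsub
      rw [hinter] at h1
      linarith
    rw [key]
    exact Finset.sum_nonneg fun j _ => aux_diag_re_nonneg hρ j
end

section
/- Let ρ be an n×n positive semidefinite complex matrix with trace 1 (a density matrix). For any divisor m of n, ℓ(m|ρ) + ℓ̃(¬m|ρ) ≤ ℓ(¬¬m|ρ) + ℓ̃(¬m|ρ) ≤ 1, where ℓ̃(k|ρ) = ℓ(k|ρ) − ℓ(1|ρ). -/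
open Matrix BigOperators
open scoped ComplexOrder

lemma negDiv_ne_zero (n m : ℕ) : negDiv n m ≠ 0 :=
  Finset.prod_ne_zero_iff.mpr fun p hp => pow_ne_zero _
    (Nat.prime_of_mem_primeFactors (Finset.mem_filter.mp hp).1).ne_zero

lemma factorization_negDiv (n m q : ℕ) :
    (negDiv n m).factorization q =
      if q ∈ n.primeFactors.filter (fun p => ¬ p ∣ m) then n.factorization q else 0 := by
  unfold negDiv
  rw [Nat.factorization_prod (fun p hp => pow_ne_zero _
    (Nat.prime_of_mem_primeFactors (Finset.mem_filter.mp hp).1).ne_zero)]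
  rw [Finset.sum_apply']
  rw [Finset.sum_congr rfl (fun p hp => by
    rw [(Nat.prime_of_mem_primeFactors (Finset.mem_filter.mp hp).1).factorization_pow,
      Finsupp.single_apply])]
  exact Finset.sum_ite_eq' _ q (fun p => n.factorization p)

lemma negDiv_dvd (n m : ℕ) (hn : n ≠ 0) : negDiv n m ∣ n := by
  rw [← Nat.factorization_le_iff_dvd (negDiv_ne_zero n m) hn]
  intro q
  rw [factorization_negDiv]
  split <;> simp

lemma prime_dvd_negDiv (n m q : ℕ) (hq : q.Prime) (hn : n ≠ 0) :
    q ∣ negDiv n m ↔ q ∣ n ∧ ¬ q ∣ m := by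
  rw [Nat.Prime.dvd_iff_one_le_factorization hq (negDiv_ne_zero n m),
    factorization_negDiv]
  split
  · next h =>
    simp only [Finset.mem_filter, Nat.mem_primeFactors] at h
    rw [← Nat.Prime.dvd_iff_one_le_factorization hq hn]
    exact ⟨fun _ => ⟨h.1.2.1, h.2⟩, fun _ => h.1.2.1⟩
  · next h =>
    simp only [Finset.mem_filter, Nat.mem_primeFactors, not_and, not_not] at h
    constructor
    · omega
    · rintro ⟨hdn, hdm⟩
      exact absurd (h ⟨hq, hdn, hn⟩) hdm

lemma dvd_negDiv_negDiv (n m : ℕ) (hn : n ≠ 0) (hm : m ∣ n) :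
    m ∣ negDiv n (negDiv n m) := by
  have hm0 : m ≠ 0 := fun h => hn (by simpa [h] using hm)
  rw [← Nat.factorization_le_iff_dvd hm0 (negDiv_ne_zero _ _)]
  intro q
  rw [factorization_negDiv]
  rcases Nat.eq_zero_or_pos (m.factorization q) with h0 | h1
  · simp [h0]
  · have hq : q.Prime := Nat.prime_of_mem_primeFactors ((Nat.support_factorization m) ▸ Finsupp.mem_support_iff.mpr (by omega : m.factorization q ≠ 0))
    have hqm : q ∣ m := (Nat.Prime.dvd_iff_one_le_factorization hq hm0).mpr h1
    have hqn : q ∣ n := hqm.trans hm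
    have : q ∈ n.primeFactors.filter (fun p => ¬ p ∣ negDiv n m) := by
      refine Finset.mem_filter.mpr ⟨Nat.mem_primeFactors.mpr ⟨hq, hqn, hn⟩, ?_⟩
      rw [prime_dvd_negDiv n m q hq hn]
      tauto
    rw [if_pos this]
    exact (Nat.factorization_le_iff_dvd hm0 hn).mpr hm q

lemma coprime_negDiv (n m : ℕ) (hn : n ≠ 0) :
    Nat.Coprime (negDiv n m) (negDiv n (negDiv n m)) := by
  by_contra h
  obtain ⟨p, hp, h1, h2⟩ := Nat.Prime.not_coprime_iff_dvd.mp h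
  rw [prime_dvd_negDiv n _ p hp hn] at h2
  exact h2.2 h1

def Sdiv (n : ℕ) [NeZero n] (d : ℕ) : Finset (ZMod n) :=
  Finset.univ.filter (fun j => (n / d) ∣ j.val)

lemma lowerProb_eq_sum (n : ℕ) [NeZero n] (d : ℕ) (hd : d ∣ n)
    (ρ : Matrix (ZMod n) (ZMod n) ℂ) :
    lowerProb n d ρ = ∑ j ∈ Sdiv n d, (ρ j j).re := by
  have hn : n ≠ 0 := NeZero.ne n
  have hd0 : d ≠ 0 := fun h => hn (by simpa [h] using hd)
  have hnd : 0 < n / d := Nat.div_pos (Nat.le_of_dvd (Nat.pos_of_ne_zero hn) hd) (Nat.pos_of_ne_zero hd0)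
  have hmul : n / d * d = n := Nat.div_mul_cancel hd
  have hlt : ∀ r ∈ Finset.range d, n / d * r < n := fun r hr => by
    have := Finset.mem_range.mp hr
    calc n / d * r < n / d * d := (Nat.mul_lt_mul_left hnd).mpr this
    _ = n := hmul
  have step1 : lowerProb n d ρ = ∑ r ∈ Finset.range d, (ρ ((n/d*r : ℕ) : ZMod n) ((n/d*r : ℕ) : ZMod n)).re := by
    unfold lowerProb projP
    rw [Finset.sum_mul, Matrix.trace_sum]
    rw [Complex.re_sum]
    congr 1
    ext r
    congr 1
    simp [Matrix.trace, Matrix.diag, Matrix.mul_apply, Matrix.single, ite_and]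
  rw [step1]
  have hinj : ∀ r ∈ Finset.range d, ∀ s ∈ Finset.range d,
      ((n/d*r : ℕ) : ZMod n) = ((n/d*s : ℕ) : ZMod n) → r = s := by
    intro r hr s hs h
    have h1 := ZMod.val_cast_of_lt (hlt r hr)
    have h2 := ZMod.val_cast_of_lt (hlt s hs)
    rw [← h1, h, h2] at h1
    have : n / d * r = n / d * s := by rw [← ZMod.val_cast_of_lt (hlt r hr), h, ZMod.val_cast_of_lt (hlt s hs)]
    exact Nat.eq_of_mul_eq_mul_left hnd this
  rw [← Finset.sum_image (f := fun j => (ρ j j).re) hinj]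
  congr 1
  ext j
  simp only [Finset.mem_image, Finset.mem_range, Sdiv, Finset.mem_filter, Finset.mem_univ, true_and]
  constructor
  · rintro ⟨r, hr, rfl⟩
    rw [ZMod.val_cast_of_lt (hlt r (Finset.mem_range.mpr hr))]
    exact Dvd.intro r rfl
  · rintro ⟨r, hr⟩
    refine ⟨r, ?_, ?_⟩
    · have hv : n / d * r < n := hr ▸ ZMod.val_lt j
      have h2 : n / d * r < n / d * d := by rw [hmul]; exact hv
      exact Nat.lt_of_mul_lt_mul_left h2
    · rw [← hr]
      exact ZMod.natCast_rightInverse j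

lemma Sdiv_subset (n : ℕ) [NeZero n] (d1 d2 : ℕ) (h12 : d1 ∣ d2) (h2 : d2 ∣ n) :
    Sdiv n d1 ⊆ Sdiv n d2 := by
  have hn : n ≠ 0 := NeZero.ne n
  have hd2 : d2 ≠ 0 := fun h => hn (by simpa [h] using h2)
  have hd1 : d1 ≠ 0 := fun h => hd2 (by simpa [h] using h12)
  obtain ⟨k, hk⟩ := h12
  have key : n / d1 = n / d2 * k := by
    apply Nat.div_eq_of_eq_mul_left (Nat.pos_of_ne_zero hd1)
    rw [mul_assoc, mul_comm k d1, ← hk, Nat.div_mul_cancel h2]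
  intro j hj
  simp only [Sdiv, Finset.mem_filter, Finset.mem_univ, true_and] at hj ⊢
  exact dvd_trans ⟨k, key⟩ hj

lemma Sdiv_inter (n : ℕ) [NeZero n] (d1 d2 : ℕ) (hco : Nat.Coprime d1 d2)
    (h1 : d1 ∣ n) (h2 : d2 ∣ n) : Sdiv n d1 ∩ Sdiv n d2 = {0} := by
  have hn : n ≠ 0 := NeZero.ne n
  have hd1 : d1 ≠ 0 := fun h => hn (by simpa [h] using h1)
  have hd2 : d2 ≠ 0 := fun h => hn (by simpa [h] using h2)
  have hmd : d1 * d2 ∣ n := Nat.Coprime.mul_dvd_of_dvd_of_dvd hco h1 h2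
  obtain ⟨c, hc⟩ := hmd
  have e1 : n / d1 = d2 * c := by
    apply Nat.div_eq_of_eq_mul_left (Nat.pos_of_ne_zero hd1)
    rw [hc]; ring
  have e2 : n / d2 = d1 * c := by
    apply Nat.div_eq_of_eq_mul_left (Nat.pos_of_ne_zero hd2)
    rw [hc]; ring
  ext j
  simp only [Finset.mem_inter, Sdiv, Finset.mem_filter, Finset.mem_univ, true_and,
    Finset.mem_singleton]
  constructor
  · rintro ⟨ha, hb⟩
    have hlcm : Nat.lcm (n / d1) (n / d2) ∣ j.val := Nat.lcm_dvd ha hb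
    have : Nat.lcm (n / d1) (n / d2) = n := by
      rw [e1, e2, Nat.lcm_mul_right, Nat.Coprime.lcm_eq_mul hco.symm, hc]; ring
    rw [this] at hlcm
    have := Nat.eq_zero_of_dvd_of_lt hlcm (ZMod.val_lt j)
    · exact (ZMod.val_eq_zero j).mp (by omega)
  · rintro rfl
    simp [ZMod.val_zero]

lemma Sdiv_one (n : ℕ) [NeZero n] : Sdiv n 1 = {0} := by
  ext j
  simp only [Sdiv, Nat.div_one, Finset.mem_filter, Finset.mem_univ, true_and, Finset.mem_singleton]
  constructor
  · intro h
    have := Nat.eq_zero_of_dvd_of_lt h (ZMod.val_lt j)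
    exact (ZMod.val_eq_zero j).mp (by omega)
  · rintro rfl; simp [ZMod.val_zero]

/-- `ℓ(m|ρ) + ℓ̃(¬m|ρ) ≤ ℓ(¬¬m|ρ) + ℓ̃(¬m|ρ) ≤ 1`, where `ℓ̃(k|ρ) = ℓ(k|ρ) − ℓ(1|ρ)`. -/
theorem lowerProb_neg_ineq (n : ℕ) [NeZero n] (ρ : Matrix (ZMod n) (ZMod n) ℂ)
    (hρ : ρ.PosSemidef) (htr : ρ.trace = 1) (m : ℕ) (hm : m ∣ n) :
    lowerProb n m ρ + (lowerProb n (negDiv n m) ρ - lowerProb n 1 ρ) ≤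
        lowerProb n (negDiv n (negDiv n m)) ρ +
          (lowerProb n (negDiv n m) ρ - lowerProb n 1 ρ) ∧
    lowerProb n (negDiv n (negDiv n m)) ρ +
        (lowerProb n (negDiv n m) ρ - lowerProb n 1 ρ) ≤ 1 := by
  classical
  have hn : n ≠ 0 := NeZero.ne n
  set f : ZMod n → ℝ := fun j => (ρ j j).re with hf
  have hfnonneg : ∀ j, 0 ≤ f j := fun j => by
    have := hρ.re_dotProduct_nonneg (Pi.single j 1)
    simpa [hf, dotProduct, Matrix.mulVec, Pi.single_apply] using this
  have hNm := negDiv_dvd n m hn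
  have hNNm := negDiv_dvd n (negDiv n m) hn
  have hmNN : m ∣ negDiv n (negDiv n m) := dvd_negDiv_negDiv n m hn hm
  have eM := lowerProb_eq_sum n m hm ρ
  have eNm := lowerProb_eq_sum n (negDiv n m) hNm ρ
  have eNNm := lowerProb_eq_sum n (negDiv n (negDiv n m)) hNNm ρ
  have e1 := lowerProb_eq_sum n 1 (one_dvd n) ρ
  have hℓ1 : lowerProb n 1 ρ = f 0 := by
    rw [e1, Sdiv_one, Finset.sum_singleton]
  constructor
  · have hsub : Sdiv n m ⊆ Sdiv n (negDiv n (negDiv n m)) := Sdiv_subset n _ _ hmNN hNNm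
    have : lowerProb n m ρ ≤ lowerProb n (negDiv n (negDiv n m)) ρ := by
      rw [eM, eNNm]
      exact Finset.sum_le_sum_of_subset_of_nonneg hsub (fun j _ _ => hfnonneg j)
    linarith
  · set A := Sdiv n (negDiv n (negDiv n m)) with hA
    set B := Sdiv n (negDiv n m) with hB
    have hinter : A ∩ B = {0} :=
      Sdiv_inter n _ _ (coprime_negDiv n m hn).symm hNNm hNm
    have hsum : ∑ j ∈ A ∪ B, f j + ∑ j ∈ A ∩ B, f j = ∑ j ∈ A, f j + ∑ j ∈ B, f j :=
      Finset.sum_union_inter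
    have hIval : ∑ j ∈ A ∩ B, f j = f 0 := by rw [hinter, Finset.sum_singleton]
    have hbound : ∑ j ∈ A ∪ B, f j ≤ ∑ j : ZMod n, f j :=
      Finset.sum_le_sum_of_subset_of_nonneg (Finset.subset_univ _) (fun j _ _ => hfnonneg j)
    have htot : ∑ j : ZMod n, f j = 1 := by
      have : (Matrix.trace ρ).re = 1 := by rw [htr]; simp
      rw [← this, Matrix.trace, Complex.re_sum]
      rfl
    rw [eNNm, eNm, hℓ1]
    show ∑ j ∈ A, f j + (∑ j ∈ B, f j - f 0) ≤ 1
    have h1 : ∑ j ∈ A ∪ B, f j + f 0 = ∑ j ∈ A, f j + ∑ j ∈ B, f j := by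
      rw [← hIval]; exact hsum
    linarith [htot ▸ hbound]
end

section
/- (Monotonicity of the upper probability.) Let ρ be an n×n positive semidefinite complex matrix with trace 1 (a density matrix). If m and k are divisors of n with m dividing k, then u(m|ρ) ≤ u(k|ρ), where u(m|ρ) = 1 − ℓ(¬m|ρ) + ℓ(1|ρ). -/
open Matrix BigOperators
open scoped ComplexOrder

lemma diag_re_nonneg {n : ℕ} [NeZero n] {ρ : Matrix (ZMod n) (ZMod n) ℂ}
    (hρ : ρ.PosSemidef) (i : ZMod n) : 0 ≤ (ρ i i).re := by
  have h := hρ.diag_nonneg (i := i)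
  exact_mod_cast (Complex.le_def.mp h).1

lemma lowerProb_eq {n : ℕ} [NeZero n] (m : ℕ) (ρ : Matrix (ZMod n) (ZMod n) ℂ) :
    lowerProb n m ρ =
      ∑ r ∈ Finset.range m, (ρ ((n / m * r : ℕ) : ZMod n) ((n / m * r : ℕ) : ZMod n)).re := by
  unfold lowerProb projP
  rw [Finset.sum_mul, Matrix.trace_sum, Complex.re_sum]
  refine Finset.sum_congr rfl fun r _ => ?_
  congr 1
  simp [Matrix.trace, Matrix.diag, Matrix.mul_apply, Matrix.single, ite_and]

lemma lowerProb_mono {n : ℕ} [NeZero n] {ρ : Matrix (ZMod n) (ZMod n) ℂ}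
    (hρ : ρ.PosSemidef) {d e : ℕ} (hde : d ∣ e) (hen : e ∣ n) :
    lowerProb n d ρ ≤ lowerProb n e ρ := by
  have hn : n ≠ 0 := NeZero.ne n
  have he : e ≠ 0 := fun h => hn (by simpa [h] using hen)
  have hd : d ≠ 0 := fun h => he (by simpa [h] using hde)
  have hq : 0 < e / d := Nat.div_pos (Nat.le_of_dvd (Nat.pos_of_ne_zero he) hde)
    (Nat.pos_of_ne_zero hd)
  rw [lowerProb_eq, lowerProb_eq]
  have key : ∀ r : ℕ, n / d * r = n / e * (e / d * r) := by
    intro r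
    rw [← mul_assoc]
    congr 1
    rw [Nat.div_mul_div_comm hen hde, mul_comm n e, Nat.mul_div_mul_left _ _ (Nat.pos_of_ne_zero he)]
  have hinj : Set.InjOn (fun r => e / d * r) (Finset.range d) := by
    intro a _ b _ hab
    exact Nat.eq_of_mul_eq_mul_left hq hab
  rw [show (∑ r ∈ Finset.range d,
        (ρ ((n / d * r : ℕ) : ZMod n) ((n / d * r : ℕ) : ZMod n)).re)
      = ∑ s ∈ (Finset.range d).image (fun r => e / d * r),
        (ρ ((n / e * s : ℕ) : ZMod n) ((n / e * s : ℕ) : ZMod n)).re by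
    rw [Finset.sum_image hinj]
    exact Finset.sum_congr rfl fun r _ => by rw [← key r]]
  refine Finset.sum_le_sum_of_subset_of_nonneg ?_ fun i _ _ => diag_re_nonneg hρ _
  intro s hs
  simp only [Finset.mem_image, Finset.mem_range] at hs ⊢
  obtain ⟨r, hr, rfl⟩ := hs
  calc e / d * r < e / d * d := mul_lt_mul_of_pos_left hr hq
    _ = e := Nat.div_mul_cancel hde

lemma negDiv_anti (n : ℕ) {m k : ℕ} (hmk : m ∣ k) : negDiv n k ∣ negDiv n m := by
  refine Finset.prod_dvd_prod_of_subset _ _ _ ?_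
  intro p hp
  simp only [Finset.mem_filter] at hp ⊢
  exact ⟨hp.1, fun h => hp.2 (h.trans hmk)⟩

/-- Monotonicity of the upper probability: if `m ∣ k` (both divisors of `n`) then
`u(m|ρ) ≤ u(k|ρ)`. -/
theorem upperProb_mono (n : ℕ) [NeZero n] (ρ : Matrix (ZMod n) (ZMod n) ℂ)
    (hρ : ρ.PosSemidef) (htr : ρ.trace = 1) (m k : ℕ) (hm : m ∣ n) (hk : k ∣ n)
    (hmk : m ∣ k) :
    upperProb n m ρ ≤ upperProb n k ρ := by
  unfold upperProb
  have := lowerProb_mono hρ (negDiv_anti n hmk) (negDiv_dvd n m (NeZero.ne n))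
  linarith
end

section
/- (Submodularity of the upper probability.) Let ρ be an n×n positive semidefinite complex matrix with trace 1 (a density matrix). For any divisors m₁ and m₂ of n, u(lcm(m₁,m₂)|ρ) − u(m₁|ρ) − u(m₂|ρ) + u(gcd(m₁,m₂)|ρ) = −Tr(ρ·𝔖(¬m₁,¬m₂)), where 𝔖(k₁,k₂) = P(lcm(k₁,k₂)) − P(k₁) − P(k₂) + P(gcd(k₁,k₂)); in particular u(lcm(m₁,m₂)|ρ) − u(m₁|ρ) − u(m₂|ρ) + u(gcd(m₁,m₂)|ρ) ≤ 0. -/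
open Matrix BigOperators
open scoped ComplexOrder

/-! ### Auxiliary arithmetic lemmas -/

lemma div_dvd_div' {a b n : ℕ} (hab : a ∣ b) (hbn : b ∣ n) : n / b ∣ n / a := by
  rcases eq_or_ne b 0 with rfl | hb
  · obtain rfl : n = 0 := zero_dvd_iff.mp hbn
    simp
  · refine ⟨b / a, ?_⟩
    rw [Nat.div_mul_div_comm hbn hab, mul_comm n b,
      Nat.mul_div_mul_left _ _ (Nat.pos_of_ne_zero hb)]

lemma div_lcm_eq_gcd_div {a b n : ℕ} (ha : a ∣ n) (hb : b ∣ n) :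
    n / Nat.lcm a b = Nat.gcd (n / a) (n / b) := by
  rcases eq_or_ne n 0 with rfl | hn
  · simp
  apply Nat.dvd_antisymm
  · exact Nat.dvd_gcd (div_dvd_div' (Nat.dvd_lcm_left a b) (Nat.lcm_dvd ha hb))
      (div_dvd_div' (Nat.dvd_lcm_right a b) (Nat.lcm_dvd ha hb))
  · set c := Nat.gcd (n / a) (n / b) with hc
    have hcn : c ∣ n := (Nat.gcd_dvd_left _ _).trans (Nat.div_dvd_of_dvd ha)
    rw [Nat.dvd_div_iff_mul_dvd (Nat.lcm_dvd ha hb), mul_comm, ← Nat.dvd_div_iff_mul_dvd hcn,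
      Nat.lcm_dvd_iff, Nat.dvd_div_iff_mul_dvd hcn, Nat.dvd_div_iff_mul_dvd hcn, mul_comm c a,
      mul_comm c b, ← Nat.dvd_div_iff_mul_dvd ha, ← Nat.dvd_div_iff_mul_dvd hb]
    exact ⟨Nat.gcd_dvd_left _ _, Nat.gcd_dvd_right _ _⟩

lemma div_gcd_eq_lcm_div {a b n : ℕ} (ha : a ∣ n) (hb : b ∣ n) :
    n / Nat.gcd a b = Nat.lcm (n / a) (n / b) := by
  rcases eq_or_ne n 0 with rfl | hn
  · simp
  have h1 : n / a ∣ n := Nat.div_dvd_of_dvd ha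
  have h2 : n / b ∣ n := Nat.div_dvd_of_dvd hb
  have := div_lcm_eq_gcd_div h1 h2
  rw [Nat.div_div_self ha hn, Nat.div_div_self hb hn] at this
  rw [← this, Nat.div_div_self (Nat.lcm_dvd h1 h2) hn]

lemma negDiv_factorization (n m p : ℕ) :
    (negDiv n m).factorization p =
      if p ∈ n.primeFactors ∧ ¬ p ∣ m then n.factorization p else 0 := by
  unfold negDiv
  rw [Nat.factorization_prod (fun q hq =>
    pow_ne_zero _ (Nat.prime_of_mem_primeFactors (Finset.mem_filter.mp hq).1).pos.ne')]
  rw [Finset.sum_congr rfl (fun q hq =>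
    (Nat.prime_of_mem_primeFactors (Finset.mem_filter.mp hq).1).factorization_pow)]
  rw [Finsupp.finset_sum_apply]
  simp only [Finsupp.single_apply]
  rw [Finset.sum_ite_eq' _ p (fun q => n.factorization q)]
  simp [Finset.mem_filter]

lemma negDiv_lcm (n m₁ m₂ : ℕ) :
    negDiv n (Nat.lcm m₁ m₂) = Nat.gcd (negDiv n m₁) (negDiv n m₂) := by
  refine Nat.eq_of_factorization_eq (negDiv_ne_zero _ _)
    (Nat.gcd_ne_zero_left (negDiv_ne_zero _ _)) fun p => ?_
  rw [Nat.factorization_gcd (negDiv_ne_zero _ _) (negDiv_ne_zero _ _), Finsupp.inf_apply,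
    negDiv_factorization, negDiv_factorization, negDiv_factorization]
  by_cases hpf : p ∈ n.primeFactors
  · have hp := Nat.prime_of_mem_primeFactors hpf
    have hiff : p ∣ Nat.lcm m₁ m₂ ↔ p ∣ m₁ ∨ p ∣ m₂ :=
      ⟨fun h => (Nat.Prime.dvd_mul hp).mp (h.trans (Nat.lcm_dvd_mul m₁ m₂)),
        fun h => h.elim (fun h => h.trans (Nat.dvd_lcm_left _ _))
          (fun h => h.trans (Nat.dvd_lcm_right _ _))⟩
    by_cases hd1 : p ∣ m₁ <;> by_cases hd2 : p ∣ m₂ <;> simp [hpf, hd1, hd2, hiff]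
  · simp [hpf]

lemma negDiv_gcd (n m₁ m₂ : ℕ) :
    negDiv n (Nat.gcd m₁ m₂) = Nat.lcm (negDiv n m₁) (negDiv n m₂) := by
  refine Nat.eq_of_factorization_eq (negDiv_ne_zero _ _)
    (Nat.lcm_ne_zero (negDiv_ne_zero _ _) (negDiv_ne_zero _ _)) fun p => ?_
  rw [Nat.factorization_lcm (negDiv_ne_zero _ _) (negDiv_ne_zero _ _), Finsupp.sup_apply,
    negDiv_factorization, negDiv_factorization, negDiv_factorization]
  by_cases hpf : p ∈ n.primeFactors
  · have hiff : p ∣ Nat.gcd m₁ m₂ ↔ p ∣ m₁ ∧ p ∣ m₂ :=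
      ⟨fun h => ⟨h.trans (Nat.gcd_dvd_left _ _), h.trans (Nat.gcd_dvd_right _ _)⟩,
        fun h => Nat.dvd_gcd h.1 h.2⟩
    by_cases hd1 : p ∣ m₁ <;> by_cases hd2 : p ∣ m₂ <;> simp [hpf, hd1, hd2, hiff]
  · simp [hpf]

/-! ### Trace formulas for `projP` -/

lemma trace_stdBasis_mul {ι : Type*} [Fintype ι] [DecidableEq ι] (a : ι) (ρ : Matrix ι ι ℂ) :
    Matrix.trace (Matrix.single a a (1:ℂ) * ρ) = ρ a a := by
  simp [Matrix.trace, Matrix.mul_apply, Matrix.single, Matrix.diag, ite_and,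
    Finset.sum_ite_eq]

lemma trace_projP_mul (n : ℕ) [NeZero n] (k : ℕ) (hk : k ∣ n)
    (ρ : Matrix (ZMod n) (ZMod n) ℂ) :
    Matrix.trace (projP n k * ρ) =
      ∑ j ∈ Finset.univ.filter (fun j : ZMod n => (n / k : ℕ) ∣ j.val), ρ j j := by
  have hn : n ≠ 0 := NeZero.ne n
  have hk0 : k ≠ 0 := by rintro rfl; exact hn (zero_dvd_iff.mp hk)
  set d := n / k with hd
  have hdk : d * k = n := Nat.div_mul_cancel hk
  have hd0 : 0 < d := by
    rcases Nat.eq_zero_or_pos d with h | h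
    · exact absurd (by rw [← hdk, h, zero_mul]) hn
    · exact h
  unfold projP
  rw [Matrix.sum_mul, Matrix.trace_sum]
  rw [Finset.sum_congr rfl (fun r _ => trace_stdBasis_mul _ ρ)]
  have hval : ∀ r < k, ((d * r : ℕ) : ZMod n).val = d * r := by
    intro r hr
    exact ZMod.val_cast_of_lt (by calc d * r < d * k := (Nat.mul_lt_mul_left hd0).mpr hr
                                      _ = n := hdk)
  refine Finset.sum_nbij' (fun r => ((d * r : ℕ) : ZMod n)) (fun x => x.val / d) ?_ ?_ ?_ ?_ ?_
  · intro r hr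
    rw [Finset.mem_range] at hr
    simp only [Finset.mem_filter, Finset.mem_univ, true_and]
    rw [hval r hr]
    exact Dvd.intro r rfl
  · intro x hx
    rw [Finset.mem_range]
    have : x.val < n := ZMod.val_lt x
    exact Nat.div_lt_of_lt_mul (by rwa [hdk])
  · intro r hr
    rw [Finset.mem_range] at hr
    show ((d * r : ℕ) : ZMod n).val / d = r
    rw [hval r hr, Nat.mul_div_cancel_left r hd0]
  · intro x hx
    simp only [Finset.mem_filter, Finset.mem_univ, true_and] at hx
    show ((d * (x.val / d) : ℕ) : ZMod n) = x
    rw [Nat.mul_div_cancel' hx]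
    exact ZMod.natCast_rightInverse x
  · intro r hr
    rfl

lemma lowerProb_eq_s13 (n : ℕ) [NeZero n] (k : ℕ) (hk : k ∣ n)
    (ρ : Matrix (ZMod n) (ZMod n) ℂ) :
    lowerProb n k ρ = ∑ j : ZMod n, if (n / k : ℕ) ∣ j.val then (ρ j j).re else 0 := by
  rw [lowerProb, trace_projP_mul n k hk, Complex.re_sum, Finset.sum_filter]

/-- Submodularity of the upper probability:
`u(lcm|ρ) − u(m₁|ρ) − u(m₂|ρ) + u(gcd|ρ) = −Tr(ρ 𝔖(¬m₁,¬m₂)) ≤ 0`. -/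
theorem upperProb_submodular (n : ℕ) [NeZero n] (ρ : Matrix (ZMod n) (ZMod n) ℂ)
    (hρ : ρ.PosSemidef) (htr : ρ.trace = 1) (m₁ m₂ : ℕ) (h₁ : m₁ ∣ n) (h₂ : m₂ ∣ n) :
    upperProb n (Nat.lcm m₁ m₂) ρ - upperProb n m₁ ρ - upperProb n m₂ ρ +
        upperProb n (Nat.gcd m₁ m₂) ρ =
      -(Matrix.trace (ρ *
        (projP n (Nat.lcm (negDiv n m₁) (negDiv n m₂)) - projP n (negDiv n m₁) -
          projP n (negDiv n m₂) + projP n (Nat.gcd (negDiv n m₁) (negDiv n m₂))))).re ∧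
    upperProb n (Nat.lcm m₁ m₂) ρ - upperProb n m₁ ρ - upperProb n m₂ ρ +
        upperProb n (Nat.gcd m₁ m₂) ρ ≤ 0 := by
  have hn : n ≠ 0 := NeZero.ne n
  set k₁ := negDiv n m₁ with hk₁def
  set k₂ := negDiv n m₂ with hk₂def
  have hk₁ : k₁ ∣ n := negDiv_dvd n m₁ hn
  have hk₂ : k₂ ∣ n := negDiv_dvd n m₂ hn
  have hkl : Nat.lcm k₁ k₂ ∣ n := Nat.lcm_dvd hk₁ hk₂
  have hkg : Nat.gcd k₁ k₂ ∣ n := (Nat.gcd_dvd_left _ _).trans hk₁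
  have hTr : (Matrix.trace (ρ *
      (projP n (Nat.lcm k₁ k₂) - projP n k₁ - projP n k₂ + projP n (Nat.gcd k₁ k₂)))).re
      = lowerProb n (Nat.lcm k₁ k₂) ρ - lowerProb n k₁ ρ - lowerProb n k₂ ρ +
        lowerProb n (Nat.gcd k₁ k₂) ρ := by
    simp only [mul_sub, mul_add]
    rw [Matrix.trace_add, Matrix.trace_sub, Matrix.trace_sub,
      Matrix.trace_mul_comm ρ (projP n (Nat.lcm k₁ k₂)), Matrix.trace_mul_comm ρ (projP n k₁),
      Matrix.trace_mul_comm ρ (projP n k₂), Matrix.trace_mul_comm ρ (projP n (Nat.gcd k₁ k₂))]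
    simp [lowerProb, Complex.sub_re, Complex.add_re]
  have heq : upperProb n (Nat.lcm m₁ m₂) ρ - upperProb n m₁ ρ - upperProb n m₂ ρ +
      upperProb n (Nat.gcd m₁ m₂) ρ =
      -(Matrix.trace (ρ *
        (projP n (Nat.lcm k₁ k₂) - projP n k₁ - projP n k₂ +
          projP n (Nat.gcd k₁ k₂)))).re := by
    rw [hTr]
    simp only [upperProb, negDiv_lcm n m₁ m₂, negDiv_gcd n m₁ m₂, ← hk₁def, ← hk₂def]
    ring
  refine ⟨heq, ?_⟩
  have hre : ∀ j : ZMod n, 0 ≤ (ρ j j).re := by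
    intro j
    have h := hρ.re_dotProduct_nonneg (Pi.single j 1)
    simpa [dotProduct, Matrix.mulVec, Pi.single_apply, Finset.sum_ite_eq] using h
  have key : lowerProb n k₁ ρ + lowerProb n k₂ ρ ≤
      lowerProb n (Nat.gcd k₁ k₂) ρ + lowerProb n (Nat.lcm k₁ k₂) ρ := by
    rw [lowerProb_eq_s13 n k₁ hk₁ ρ, lowerProb_eq_s13 n k₂ hk₂ ρ, lowerProb_eq_s13 n _ hkg ρ,
      lowerProb_eq_s13 n _ hkl ρ, ← Finset.sum_add_distrib, ← Finset.sum_add_distrib]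
    refine Finset.sum_le_sum fun j _ => ?_
    rw [div_gcd_eq_lcm_div hk₁ hk₂, div_lcm_eq_gcd_div hk₁ hk₂]
    have ha := hre j
    by_cases hd1 : (n / k₁) ∣ j.val <;> by_cases hd2 : (n / k₂) ∣ j.val
    · have hg : Nat.gcd (n / k₁) (n / k₂) ∣ j.val := (Nat.gcd_dvd_left _ _).trans hd1
      have hl : Nat.lcm (n / k₁) (n / k₂) ∣ j.val := Nat.lcm_dvd hd1 hd2
      simp [hd1, hd2, hg, hl]
    · have hg : Nat.gcd (n / k₁) (n / k₂) ∣ j.val := (Nat.gcd_dvd_left _ _).trans hd1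
      have hl : ¬ Nat.lcm (n / k₁) (n / k₂) ∣ j.val :=
        fun h => hd2 ((Nat.dvd_lcm_right _ _).trans h)
      simp [hd1, hd2, hg, hl]
    · have hg : Nat.gcd (n / k₁) (n / k₂) ∣ j.val := (Nat.gcd_dvd_right _ _).trans hd2
      have hl : ¬ Nat.lcm (n / k₁) (n / k₂) ∣ j.val :=
        fun h => hd1 ((Nat.dvd_lcm_left _ _).trans h)
      simp [hd1, hd2, hg, hl]
    · simp only [hd1, hd2, if_false]
      split_ifs <;> linarith
  rw [heq, hTr]
  linarith
end
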